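/- arXiv:1409.4752 — 3 statements merged into one kernel-verified Lean document; each statement's English description precedes it below -/
import Mathlib

section
/- Let X and Z be finite alphabets, n ∈ ℕ, and for each m ∈ {1,…,n} let V_m, Ṽ_m : X → P(Z) be channels with d(V_m,Ṽ_m) ≤ ε for some ε ∈ (0,1). Let U be an arbitrary finite set, P_U the uniform distribution on U, and E(xⁿ|u) an arbitrary stochastic encoder. Define the joint distributions P(u,zⁿ) = ∑_{xⁿ} ∏_{m=1}^n V_m(z_m|x_m) · E(xⁿ|u)P_U(u) and P̃(u,zⁿ) = ∑_{xⁿ} ∏_{m=1}^n Ṽ_m(z_m|x_m) · E(xⁿ|u)P_U(u). Then |I(U;Zⁿ‖P) − I(U;Zⁿ‖P̃)| ≤ n·(4ε·log|Z| + 4H₂(ε)). -/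
/-!
Write `Q_u` for the output of the product channel on the input distribution `E(·|u)`. Under a
prior `ρ` on `U` the mutual information is `(H(∑ ρ_u Q_u) - ∑ ρ_u H(Q_u)) / log 2`, and
`∑ ρ_u Q_u` is again the output of the product channel, on the averaged input. So it suffices
that the output entropy of a product channel moves by at most `2ε log|Z| + 2 h(ε)` nats when the
channel of one letter is replaced; swapping the `n` letters one at a time then costs `n` times
that. For one letter, fix the other output letters: each slice of the output distribution is a
subdistribution that moves in `ℓ¹` by at most `ε` times its mass, and a Fannes-type bound applies
to it. That bound comes from `|η x - η y| ≤ h |x - y|` for `η t = -t log t`, summed over `Z`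
with Jensen's inequality.
-/

open Real Finset

/-- Binary entropy function (base 2). -/
noncomputable def H2 (ε : ℝ) : ℝ :=
  -(ε * Real.logb 2 ε) - (1 - ε) * Real.logb 2 (1 - ε)

/-- `p` is a probability distribution on the finite alphabet `α`. -/
def IsProb {α : Type*} [Fintype α] (p : α → ℝ) : Prop :=
  (∀ a, 0 ≤ p a) ∧ ∑ a, p a = 1

/-- `W` is a channel (stochastic matrix) from `X` to `Y`. -/
def IsChannel {X Y : Type*} [Fintype Y] (W : X → Y → ℝ) : Prop :=
  ∀ x, (∀ y, 0 ≤ W x y) ∧ ∑ y, W x y = 1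

/-- Conditional entropy `H(Y|X‖P)` (base 2) of a joint distribution `P` on `X × Y`. -/
noncomputable def condEnt {X Y : Type*} [Fintype X] [Fintype Y] (P : X × Y → ℝ) : ℝ :=
  -∑ x : X, ∑ y : Y, P (x, y) * Real.logb 2 (P (x, y) / ∑ y' : Y, P (x, y'))

/-- Mutual information `I(U;Y‖P)` (base 2) of a joint distribution `P` on `U × Y`. -/
noncomputable def mutInf {U Y : Type*} [Fintype U] [Fintype Y] (P : U × Y → ℝ) : ℝ :=
  ∑ u : U, ∑ y : Y,
    P (u, y) * Real.logb 2 (P (u, y) / ((∑ y' : Y, P (u, y')) * ∑ u' : U, P (u', y)))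

/-- Channel distance `d(W,W') = max_x ∑_y |W(y|x) − W'(y|x)|`. -/
noncomputable def dChan {X Y : Type*} [Fintype Y] (W W' : X → Y → ℝ) : ℝ :=
  ⨆ x : X, ∑ y : Y, |W x y - W' x y|

lemma negMulLog_add_le {a b : ℝ} (ha : 0 ≤ a) (hb : 0 ≤ b) :
    negMulLog (a + b) ≤ negMulLog a + negMulLog b := by
  rcases ha.eq_or_lt with rfl | ha
  · simp
  rcases hb.eq_or_lt with rfl | hb
  · simp
  have h1 : log a ≤ log (a + b) := log_le_log ha (by linarith)
  have h2 : log b ≤ log (a + b) := log_le_log hb (by linarith)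
  simp only [negMulLog, neg_mul]
  nlinarith

lemma negMulLog_sub_negMulLog_add_le {y t : ℝ} (hy : 0 ≤ y) (ht : 0 ≤ t) (hyt : y + t ≤ 1) :
    negMulLog y - negMulLog (y + t) ≤ negMulLog (1 - t) := by
  rcases hyt.eq_or_lt with hyt | hyt
  · rw [hyt, show 1 - t = y by linarith]
    simp
  -- `y + t` and `1 - t` are the convex combinations of `y` and `1` with swapped weights `a`, `b`.
  have hs : 0 < 1 - y := by linarith
  set a := (1 - y - t) / (1 - y)
  set b := t / (1 - y)
  have ha : 0 ≤ a := div_nonneg (by linarith) hs.le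
  have hb : 0 ≤ b := div_nonneg ht hs.le
  have hab : a + b = 1 := by simp only [a, b]; field_simp; ring
  have hconv := convexOn_mul_log.2 (Set.mem_Ici.2 hy) (Set.mem_Ici.2 zero_le_one)
  have h1 := hconv ha hb hab
  have h2 := hconv hb ha (by linarith)
  have e1 : a • y + b • (1 : ℝ) = y + t := by simp only [a, b, smul_eq_mul]; field_simp; ring
  have e2 : b • y + a • (1 : ℝ) = 1 - t := by simp only [a, b, smul_eq_mul]; field_simp; ring
  rw [e1] at h1
  rw [e2] at h2
  simp only [smul_eq_mul, log_one, mul_zero, add_zero] at h1 h2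
  have hsum : a * (y * log y) + b * (y * log y) = y * log y := by rw [← add_mul, hab, one_mul]
  simp only [negMulLog, neg_mul]
  linarith

lemma abs_negMulLog_sub_le_binEntropy {x y : ℝ} (hx : 0 ≤ x) (hy : 0 ≤ y) (hx1 : x ≤ 1)
    (hy1 : y ≤ 1) : |negMulLog x - negMulLog y| ≤ binEntropy |x - y| := by
  wlog hxy : y ≤ x generalizing x y
  · rw [abs_sub_comm, abs_sub_comm x]
    exact this hy hx hy1 hx1 (by linarith)
  obtain ⟨t, ht, rfl⟩ : ∃ t, 0 ≤ t ∧ x = y + t := ⟨x - y, by linarith, by ring⟩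
  rw [add_sub_cancel_left, abs_of_nonneg ht, binEntropy_eq_negMulLog_add_negMulLog_one_sub,
    abs_sub_le_iff]
  have h1 := negMulLog_add_le hy ht
  have h2 := negMulLog_sub_negMulLog_add_le hy ht hx1
  have h3 := negMulLog_nonneg ht (by linarith)
  have h4 := negMulLog_nonneg (x := 1 - t) (by linarith) (by linarith)
  constructor <;> linarith

lemma monotoneOn_add_negMulLog : MonotoneOn (fun x => x + negMulLog x) (Set.Icc 0 1) := by
  have hderiv : ∀ x ∈ interior (Set.Icc (0 : ℝ) 1),
      HasDerivAt (fun x => x + negMulLog x) (1 + (-log x - 1)) x := fun x hx => by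
    rw [interior_Icc] at hx
    exact (hasDerivAt_id x).add (hasDerivAt_negMulLog hx.1.ne')
  refine monotoneOn_of_deriv_nonneg (convex_Icc 0 1)
    (continuous_id.add continuous_negMulLog).continuousOn
    (fun x hx => (hderiv x hx).differentiableAt.differentiableWithinAt) fun x hx => ?_
  rw [(hderiv x hx).deriv]
  rw [interior_Icc] at hx
  linarith [log_nonpos hx.1.le hx.2.le]

lemma le_two_mul_negMulLog_one_sub {δ : ℝ} (hδ0 : 0 ≤ δ) (hδ : δ ≤ 1 / 2) :
    δ ≤ 2 * negMulLog (1 - δ) := by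
  have hlog : log (1 - δ) ≤ -δ := by linarith [log_le_sub_one_of_pos (x := 1 - δ) (by linarith)]
  rw [negMulLog, neg_mul]
  nlinarith

noncomputable def entropy {Z : Type*} [Fintype Z] (p : Z → ℝ) : ℝ :=
  ∑ z, negMulLog (p z)

section Entropy

variable {Z : Type*} [Fintype Z]

lemma entropy_nonneg {p : Z → ℝ} (hp0 : ∀ z, 0 ≤ p z) (hp1 : ∑ z, p z = 1) :
    0 ≤ entropy p :=
  sum_nonneg fun z _ =>
    negMulLog_nonneg (hp0 z) (hp1 ▸ single_le_sum (fun i _ => hp0 i) (mem_univ z))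

lemma entropy_const_mul (m : ℝ) (p : Z → ℝ) :
    entropy (fun z => m * p z) = (∑ z, p z) * negMulLog m + m * entropy p := by
  simp only [entropy, negMulLog_mul, sum_add_distrib, sum_mul, mul_sum]

lemma sum_negMulLog_le {t : Z → ℝ} (ht : ∀ z, 0 ≤ t z) :
    ∑ z, negMulLog (t z) ≤ (∑ z, t z) * log (Fintype.card Z) + negMulLog (∑ z, t z) := by
  rcases isEmpty_or_nonempty Z with hZ | hZ
  · simp
  set k : ℝ := (Fintype.card Z : ℝ)
  have hk : 0 < k := by simp only [k]; exact_mod_cast Fintype.card_pos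
  have hjensen := concaveOn_negMulLog.le_map_sum (t := univ) (w := fun _ => k⁻¹) (p := t)
    (fun _ _ => by positivity) (by simp [k, hk.ne']) (fun z _ => Set.mem_Ici.2 (ht z))
  simp only [smul_eq_mul, ← mul_sum] at hjensen
  have hscale : k * negMulLog (k⁻¹ * ∑ z, t z) =
      (∑ z, t z) * log k + negMulLog (∑ z, t z) := by
    rw [negMulLog_mul, negMulLog, log_inv]
    field_simp
  calc ∑ z, negMulLog (t z) = k * (k⁻¹ * ∑ z, negMulLog (t z)) := by field_simp
    _ ≤ k * negMulLog (k⁻¹ * ∑ z, t z) := mul_le_mul_of_nonneg_left hjensen hk.le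
    _ = _ := hscale

lemma entropy_le_log_card {p : Z → ℝ} (hp0 : ∀ z, 0 ≤ p z) (hp1 : ∑ z, p z = 1) :
    entropy p ≤ log (Fintype.card Z) := by
  simpa [entropy, hp1] using sum_negMulLog_le hp0

lemma abs_entropy_sub_le {p q : Z → ℝ} {δ : ℝ} (hp0 : ∀ z, 0 ≤ p z) (hp1 : ∑ z, p z = 1)
    (hq0 : ∀ z, 0 ≤ q z) (hq1 : ∑ z, q z = 1) (hδ1 : δ ≤ 1) (hpq : ∑ z, |p z - q z| ≤ δ) :
    |entropy p - entropy q| ≤ 2 * δ * log (Fintype.card Z) + 2 * binEntropy δ := by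
  set k : ℝ := (Fintype.card Z : ℝ)
  set t : Z → ℝ := fun z => |p z - q z|
  set δ' := ∑ z, t z
  have ht0 : ∀ z, 0 ≤ t z := fun z => abs_nonneg _
  have hδ'0 : 0 ≤ δ' := sum_nonneg fun z _ => ht0 z
  have hδ0 : 0 ≤ δ := hδ'0.trans hpq
  have hlog : 0 ≤ log k := log_natCast_nonneg _
  have hbin : 0 ≤ binEntropy δ := binEntropy_nonneg hδ0 hδ1
  rcases le_or_gt (1 / 2) δ with hδ | hδ
  · have hk : log k ≤ 2 * δ * log k := by nlinarith
    have := entropy_nonneg hp0 hp1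
    have := entropy_le_log_card hp0 hp1
    have := entropy_nonneg hq0 hq1
    have := entropy_le_log_card hq0 hq1
    rw [abs_sub_le_iff]
    constructor <;> linarith
  have hle1 : ∀ z, p z ≤ 1 := fun z => hp1 ▸ single_le_sum (fun i _ => hp0 i) (mem_univ z)
  have hle1' : ∀ z, q z ≤ 1 := fun z => hq1 ▸ single_le_sum (fun i _ => hq0 i) (mem_univ z)
  have hpointwise : |entropy p - entropy q| ≤ ∑ z, binEntropy (t z) := by
    rw [entropy, entropy, ← sum_sub_distrib]
    exact (abs_sum_le_sum_abs _ _).trans <| sum_le_sum fun z _ =>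
      abs_negMulLog_sub_le_binEntropy (hp0 z) (hq0 z) (hle1 z) (hle1' z)
  have hcomplement : ∑ z, negMulLog (1 - t z) ≤ δ' := sum_le_sum fun z _ => by
    have : t z ≤ 1 := (single_le_sum (fun i _ => ht0 i) (mem_univ z)).trans (by linarith)
    simpa using negMulLog_le_one_sub_self (x := 1 - t z) (by linarith)
  have hmono : δ' + negMulLog δ' ≤ δ + negMulLog δ :=
    monotoneOn_add_negMulLog ⟨hδ'0, by linarith⟩ ⟨hδ0, hδ1⟩ hpq
  calc |entropy p - entropy q| ≤ ∑ z, negMulLog (t z) + ∑ z, negMulLog (1 - t z) := by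
        simpa only [binEntropy_eq_negMulLog_add_negMulLog_one_sub, sum_add_distrib]
          using hpointwise
    _ ≤ (δ' * log k + negMulLog δ') + δ' := add_le_add (sum_negMulLog_le ht0) hcomplement
    -- `negMulLog` is not monotone on `[0, 1]`, but `t + negMulLog t` is.
    _ ≤ δ * log k + (δ + negMulLog δ) := by
        linarith [mul_le_mul_of_nonneg_right hpq hlog]
    _ ≤ 2 * δ * log k + 2 * binEntropy δ := by
        rw [binEntropy_eq_negMulLog_add_negMulLog_one_sub]
        linarith [mul_nonneg hδ0 hlog, negMulLog_nonneg hδ0 hδ1,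
          le_two_mul_negMulLog_one_sub hδ0 hδ.le]

lemma abs_entropy_sub_le_of_sum_eq {f g : Z → ℝ} {m δ : ℝ} (hf0 : ∀ z, 0 ≤ f z)
    (hg0 : ∀ z, 0 ≤ g z) (hfm : ∑ z, f z = m) (hgm : ∑ z, g z = m) (hδ1 : δ ≤ 1)
    (hfg : ∑ z, |f z - g z| ≤ δ * m) :
    |entropy f - entropy g| ≤ m * (2 * δ * log (Fintype.card Z) + 2 * binEntropy δ) := by
  rcases (hfm ▸ sum_nonneg fun z _ => hf0 z : 0 ≤ m).eq_or_lt with rfl | hm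
  · have hf : f = 0 := funext fun z =>
      (sum_eq_zero_iff_of_nonneg fun i _ => hf0 i).1 hfm z (mem_univ z)
    have hg : g = 0 := funext fun z =>
      (sum_eq_zero_iff_of_nonneg fun i _ => hg0 i).1 hgm z (mem_univ z)
    simp [hf, hg, entropy]
  have hf : f = fun z => m * (f z / m) := funext fun z => by field_simp
  have hg : g = fun z => m * (g z / m) := funext fun z => by field_simp
  have hnormalize : ∀ h : Z → ℝ, ∑ z, h z = m → ∑ z, h z / m = 1 := fun h hh => by
    rw [← sum_div, hh, div_self hm.ne']
  have hpq : ∑ z, |f z / m - g z / m| ≤ δ := by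
    simp only [← sub_div, abs_div, abs_of_pos hm, ← sum_div]
    rwa [div_le_iff₀ hm]
  have key := abs_entropy_sub_le (fun z => div_nonneg (hf0 z) hm.le) (hnormalize f hfm)
    (fun z => div_nonneg (hg0 z) hm.le) (hnormalize g hgm) hδ1 hpq
  rw [hf, hg, entropy_const_mul, entropy_const_mul, hnormalize f hfm, hnormalize g hgm,
    add_sub_add_left_eq_sub, ← mul_sub, abs_mul, abs_of_pos hm]
  exact mul_le_mul_of_nonneg_left key hm.le

lemma abs_sum_entropy_mixture_sub_le {X R : Type*} [Fintype X] [Fintype R] {μ : X → R → ℝ}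
    (hμ0 : ∀ x r, 0 ≤ μ x r) (hμ1 : ∑ x, ∑ r, μ x r = 1) {A B : X → Z → ℝ} (hA : IsChannel A)
    (hB : IsChannel B) {δ : ℝ} (hδ1 : δ ≤ 1) (hAB : ∀ x, ∑ z, |A x z - B x z| ≤ δ) :
    |∑ r, entropy (fun z => ∑ x, μ x r * A x z) - ∑ r, entropy (fun z => ∑ x, μ x r * B x z)|
      ≤ 2 * δ * log (Fintype.card Z) + 2 * binEntropy δ := by
  set mass : R → ℝ := fun r => ∑ x, μ x r
  have hmass : ∀ C : X → Z → ℝ, IsChannel C → ∀ r, ∑ z, ∑ x, μ x r * C x z = mass r :=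
    fun C hC r => by rw [sum_comm]; simp only [← mul_sum, (hC _).2, mul_one, mass]
  have hnonneg : ∀ C : X → Z → ℝ, IsChannel C → ∀ r z, 0 ≤ ∑ x, μ x r * C x z :=
    fun C hC r z => sum_nonneg fun x _ => mul_nonneg (hμ0 x r) ((hC x).1 z)
  have hclose : ∀ r, ∑ z, |∑ x, μ x r * A x z - ∑ x, μ x r * B x z| ≤ δ * mass r := fun r =>
    calc ∑ z, |∑ x, μ x r * A x z - ∑ x, μ x r * B x z|
        ≤ ∑ z, ∑ x, μ x r * |A x z - B x z| := sum_le_sum fun z _ => by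
          rw [← sum_sub_distrib]
          refine (abs_sum_le_sum_abs _ _).trans (le_of_eq (sum_congr rfl fun x _ => ?_))
          rw [← mul_sub, abs_mul, abs_of_nonneg (hμ0 x r)]
      _ = ∑ x, μ x r * ∑ z, |A x z - B x z| := by rw [sum_comm]; simp only [mul_sum]
      _ ≤ ∑ x, μ x r * δ := sum_le_sum fun x _ => mul_le_mul_of_nonneg_left (hAB x) (hμ0 x r)
      _ = δ * mass r := by rw [← sum_mul, mul_comm]
  rw [← sum_sub_distrib]
  calc _ ≤ ∑ r, mass r * (2 * δ * log (Fintype.card Z) + 2 * binEntropy δ) :=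
        (abs_sum_le_sum_abs _ _).trans <| sum_le_sum fun r _ =>
          abs_entropy_sub_le_of_sum_eq (hnonneg A hA r) (hnonneg B hB r) (hmass A hA r)
            (hmass B hB r) hδ1 (hclose r)
    _ = _ := by rw [← sum_mul, show ∑ r, mass r = 1 from sum_comm.trans hμ1, one_mul]

end Entropy

lemma abs_sub_le_card_mul_of_update {ι α : Type*} [Fintype ι] [DecidableEq ι]
    (F : (ι → α) → ℝ) {a b : ι → α} {K : ℝ}
    (hF : ∀ c : ι → α, (∀ i, c i = a i ∨ c i = b i) →
      ∀ j, |F c - F (Function.update c j (b j))| ≤ K) :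
    |F a - F b| ≤ Fintype.card ι * K := by
  have hhybrid : ∀ s : Finset ι, |F a - F (s.piecewise b a)| ≤ #s * K := by
    intro s
    induction s using Finset.induction_on with
    | empty => simp
    | insert j s hj ih =>
      have hc : ∀ i, s.piecewise b a i = a i ∨ s.piecewise b a i = b i := fun i => by
        by_cases hi : i ∈ s <;> simp [hi]
      rw [piecewise_insert, card_insert_of_notMem hj, Nat.cast_succ, add_one_mul]
      exact (abs_sub_le _ _ _).trans (add_le_add ih (hF _ hc j))
  simpa using hhybrid univ

section ProductChannel

variable {ι X Z : Type*} [Fintype ι] [DecidableEq ι] [Fintype X]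

noncomputable def productOutput (W : ι → X → Z → ℝ) (w : (ι → X) → ℝ) (z : ι → Z) : ℝ :=
  ∑ x, w x * ∏ i, W i (x i) (z i)

lemma productOutput_splitAt (W : ι → X → Z → ℝ) (w : (ι → X) → ℝ) (j : ι) (C : X → Z → ℝ)
    (ζ : Z) (r : {i // i ≠ j} → Z) :
    productOutput (Function.update W j C) w ((Equiv.funSplitAt j Z).symm (ζ, r)) =
      ∑ x, (w x * ∏ i : {i // i ≠ j}, W i (x i) (r i)) * C (x j) ζ := by
  refine sum_congr rfl fun x _ => ?_
  rw [Fintype.prod_eq_mul_prod_subtype_ne _ j]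
  have hrest : ∀ i : {i // i ≠ j}, Function.update W j C i (x i)
      ((Equiv.funSplitAt j Z).symm (ζ, r) i) = W i (x i) (r i) := fun i => by
    rw [Function.update_of_ne i.2, Equiv.funSplitAt_symm_apply, dif_neg i.2]
  rw [prod_congr rfl fun i _ => hrest i, Function.update_self, Equiv.funSplitAt_symm_apply,
    dif_pos rfl]
  ring

lemma sum_mul_productOutput {U : Type*} [Fintype U] (ρ : U → ℝ) (W : ι → X → Z → ℝ)
    (E : U → (ι → X) → ℝ) (z : ι → Z) :
    ∑ u, ρ u * productOutput W (E u) z = productOutput W (fun x => ∑ u, ρ u * E u x) z := by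
  simp only [productOutput, mul_sum, sum_mul]
  rw [sum_comm]
  exact sum_congr rfl fun x _ => sum_congr rfl fun u _ => by ring

lemma productOutput_nonneg {W : ι → X → Z → ℝ} (hW : ∀ i x z, 0 ≤ W i x z) {w : (ι → X) → ℝ}
    (hw0 : ∀ x, 0 ≤ w x) (z : ι → Z) : 0 ≤ productOutput W w z :=
  sum_nonneg fun x _ => mul_nonneg (hw0 x) (prod_nonneg fun i _ => hW i (x i) (z i))

variable [Fintype Z]

lemma sum_productOutput {W : ι → X → Z → ℝ} (hW : ∀ i, IsChannel (W i)) (w : (ι → X) → ℝ) :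
    ∑ z, productOutput W w z = ∑ x, w x := by
  simp only [productOutput]
  rw [sum_comm]
  refine sum_congr rfl fun x _ => ?_
  rw [← mul_sum, ← Fintype.prod_sum, Fintype.prod_eq_one _ fun i => (hW i (x i)).2, mul_one]

lemma abs_entropy_productOutput_update_sub_le {W : ι → X → Z → ℝ} (hW : ∀ i, IsChannel (W i))
    {j : ι} {C : X → Z → ℝ} (hC : IsChannel C) {δ : ℝ} (hδ1 : δ ≤ 1)
    (hWC : ∀ x, ∑ z, |W j x z - C x z| ≤ δ) {w : (ι → X) → ℝ} (hw0 : ∀ x, 0 ≤ w x)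
    (hw1 : ∑ x, w x = 1) :
    |entropy (productOutput W w) - entropy (productOutput (Function.update W j C) w)|
      ≤ 2 * δ * log (Fintype.card Z) + 2 * binEntropy δ := by
  set μ : (ι → X) → ({i // i ≠ j} → Z) → ℝ := fun x r => w x * ∏ i : {i // i ≠ j}, W i (x i) (r i)
  have hsplit : ∀ D : X → Z → ℝ, entropy (productOutput (Function.update W j D) w) =
      ∑ r, entropy (fun ζ => ∑ x, μ x r * D (x j) ζ) := fun D => by
    rw [entropy, ← (Equiv.funSplitAt j Z).symm.sum_comp, Fintype.sum_prod_type, sum_comm]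
    simp only [productOutput_splitAt, entropy, μ]
  have hμ1 : ∑ x, ∑ r, μ x r = 1 := by
    rw [← hw1]
    refine sum_congr rfl fun x _ => ?_
    have hrest : ∑ r : {i // i ≠ j} → Z, ∏ i : {i // i ≠ j}, W i (x i) (r i) = 1 := by
      rw [← Fintype.prod_sum]
      exact Fintype.prod_eq_one _ fun i => (hW i (x i)).2
    rw [← mul_sum, hrest, mul_one]
  have hsplitW := hsplit (W j)
  rw [Function.update_eq_self] at hsplitW
  rw [hsplitW, hsplit]
  exact abs_sum_entropy_mixture_sub_le (μ := μ) (A := fun x => W j (x j)) (B := fun x => C (x j))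
    (fun x r => mul_nonneg (hw0 x) (prod_nonneg fun i _ => (hW i.1 (x i)).1 (r i))) hμ1
    (fun x => hW j (x j)) (fun x => hC (x j)) hδ1 (fun x => hWC (x j))

lemma abs_entropy_productOutput_sub_le {V V' : ι → X → Z → ℝ} (hV : ∀ i, IsChannel (V i))
    (hV' : ∀ i, IsChannel (V' i)) {δ : ℝ} (hδ0 : 0 ≤ δ) (hδ1 : δ ≤ 1)
    (hVV' : ∀ i x, ∑ z, |V i x z - V' i x z| ≤ δ) {w : (ι → X) → ℝ} (hw0 : ∀ x, 0 ≤ w x)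
    (hw1 : ∑ x, w x = 1) :
    |entropy (productOutput V w) - entropy (productOutput V' w)|
      ≤ Fintype.card ι * (2 * δ * log (Fintype.card Z) + 2 * binEntropy δ) := by
  refine abs_sub_le_card_mul_of_update (fun W => entropy (productOutput W w)) fun c hc j => ?_
  have hchannel : ∀ i, IsChannel (c i) := fun i =>
    (hc i).elim (fun h => h ▸ hV i) (fun h => h ▸ hV' i)
  refine abs_entropy_productOutput_update_sub_le hchannel (hV' j) hδ1 (fun x => ?_) hw0 hw1
  rcases hc j with h | h <;> rw [h]
  · exact hVV' j x
  · simpa using hδ0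

end ProductChannel

lemma mutInf_eq_entropy_sub {U Y : Type*} [Fintype U] [Fintype Y] {ρ : U → ℝ}
    (hρ0 : ∀ u, 0 ≤ ρ u) {Q : U → Y → ℝ} (hQ0 : ∀ u y, 0 ≤ Q u y) (hQ1 : ∀ u, ∑ y, Q u y = 1) :
    mutInf (fun p : U × Y => ρ p.1 * Q p.1 p.2) =
      (entropy (fun y => ∑ u, ρ u * Q u y) - ∑ u, ρ u * entropy (Q u)) / log 2 := by
  set Qbar : Y → ℝ := fun y => ∑ u, ρ u * Q u y
  have hterm : ∀ u y, ρ u * Q u y * logb 2 (ρ u * Q u y / ((∑ y', ρ u * Q u y') * Qbar y)) =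
      (-(ρ u * Q u y * log (Qbar y)) - ρ u * negMulLog (Q u y)) / log 2 := fun u y => by
    rw [← mul_sum, hQ1, mul_one]
    rcases (hρ0 u).eq_or_lt with hρ | hρ
    · simp [← hρ]
    rcases (hQ0 u y).eq_or_lt with hQ | hQ
    · simp [← hQ]
    have hQbar : 0 < Qbar y := (mul_pos hρ hQ).trans_le
      (single_le_sum (fun u' _ => mul_nonneg (hρ0 u') (hQ0 u' y)) (mem_univ u))
    rw [mul_div_mul_left _ _ hρ.ne', logb, log_div hQ.ne' hQbar.ne', negMulLog]
    ring
  have hmix : ∑ u, ∑ y, ρ u * Q u y * log (Qbar y) = -entropy Qbar := by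
    rw [sum_comm, entropy, ← sum_neg_distrib]
    exact sum_congr rfl fun y _ => by rw [← sum_mul, negMulLog, neg_mul, neg_neg]
  calc mutInf (fun p : U × Y => ρ p.1 * Q p.1 p.2)
      = ∑ u, ∑ y, (-(ρ u * Q u y * log (Qbar y)) - ρ u * negMulLog (Q u y)) / log 2 :=
        sum_congr rfl fun u _ => sum_congr rfl fun y _ => hterm u y
    _ = _ := by
      simp only [← sum_div, sum_sub_distrib, sum_neg_distrib, hmix, entropy, mul_sum]
      ring

lemma abs_mutInf_productOutput_sub_le {ι X Z U : Type*} [Fintype ι] [DecidableEq ι] [Fintype X]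
    [Fintype Z] [Fintype U] {ρ : U → ℝ} (hρ0 : ∀ u, 0 ≤ ρ u) (hρ1 : ∑ u, ρ u = 1)
    {E : U → (ι → X) → ℝ} (hE0 : ∀ u x, 0 ≤ E u x) (hE1 : ∀ u, ∑ x, E u x = 1)
    {V V' : ι → X → Z → ℝ} (hV : ∀ i, IsChannel (V i)) (hV' : ∀ i, IsChannel (V' i)) {δ : ℝ}
    (hδ0 : 0 ≤ δ) (hδ1 : δ ≤ 1) (hVV' : ∀ i x, ∑ z, |V i x z - V' i x z| ≤ δ) :
    |mutInf (fun p : U × (ι → Z) => ρ p.1 * productOutput V (E p.1) p.2) -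
        mutInf (fun p : U × (ι → Z) => ρ p.1 * productOutput V' (E p.1) p.2)|
      ≤ 2 * (Fintype.card ι * (2 * δ * log (Fintype.card Z) + 2 * binEntropy δ)) / log 2 := by
  set K := Fintype.card ι * (2 * δ * log (Fintype.card Z) + 2 * binEntropy δ)
  have hnonneg : ∀ W : ι → X → Z → ℝ, (∀ i, IsChannel (W i)) →
      ∀ u z, 0 ≤ productOutput W (E u) z := fun W hW u =>
    productOutput_nonneg (fun i x z => (hW i x).1 z) (hE0 u)
  have hmass : ∀ W : ι → X → Z → ℝ, (∀ i, IsChannel (W i)) →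
      ∀ u, ∑ z, productOutput W (E u) z = 1 := fun W hW u =>
    (sum_productOutput hW (E u)).trans (hE1 u)
  have houtput : |entropy (productOutput V fun x => ∑ u, ρ u * E u x) -
      entropy (productOutput V' fun x => ∑ u, ρ u * E u x)| ≤ K :=
    abs_entropy_productOutput_sub_le hV hV' hδ0 hδ1 hVV'
      (fun x => sum_nonneg fun u _ => mul_nonneg (hρ0 u) (hE0 u x))
      (by rw [sum_comm]; simp only [← mul_sum, hE1, mul_one, hρ1])
  have hcond : |∑ u, ρ u * entropy (productOutput V (E u)) -
      ∑ u, ρ u * entropy (productOutput V' (E u))| ≤ K :=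
    calc _ ≤ ∑ u, ρ u * |entropy (productOutput V (E u)) - entropy (productOutput V' (E u))| := by
          simp only [← sum_sub_distrib, ← mul_sub]
          refine (abs_sum_le_sum_abs _ _).trans (le_of_eq (sum_congr rfl fun u _ => ?_))
          rw [abs_mul, abs_of_nonneg (hρ0 u)]
      _ ≤ ∑ u, ρ u * K := sum_le_sum fun u _ => mul_le_mul_of_nonneg_left
          (abs_entropy_productOutput_sub_le hV hV' hδ0 hδ1 hVV' (hE0 u) (hE1 u)) (hρ0 u)
      _ = K := by rw [← sum_mul, hρ1, one_mul]
  rw [mutInf_eq_entropy_sub hρ0 (hnonneg V hV) (hmass V hV),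
    mutInf_eq_entropy_sub hρ0 (hnonneg V' hV') (hmass V' hV'), ← sub_div, abs_div,
    abs_of_pos (log_pos one_lt_two)]
  simp only [sum_mul_productOutput]
  gcongr
  calc _ = |_ - _ - (_ - _)| := by rw [sub_sub_sub_comm]
    _ ≤ _ := abs_sub _ _
    _ ≤ K + K := add_le_add houtput hcond
    _ = 2 * K := by ring

lemma H2_eq_binEntropy_div_log_two (ε : ℝ) : H2 ε = binEntropy ε / log 2 := by
  rw [H2, binEntropy_eq_negMulLog_add_negMulLog_one_sub, logb, logb, negMulLog, negMulLog]
  ring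

/-- continuity of multi-letter mutual information for time-varying channels. -/
theorem mutual_information_time_varying_continuity {X Z U : Type*}
    [Fintype X] [Fintype Z] [Fintype U] [Nonempty U]
    {ε : ℝ} (hε : ε ∈ Set.Ioo (0 : ℝ) 1) (n : ℕ)
    (V V' : Fin n → X → Z → ℝ)
    (hV : ∀ m, IsChannel (V m)) (hV' : ∀ m, IsChannel (V' m))
    (hd : ∀ m, dChan (V m) (V' m) ≤ ε)
    (E : U → (Fin n → X) → ℝ)
    (hE : ∀ u, (∀ xn, 0 ≤ E u xn) ∧ ∑ xn : Fin n → X, E u xn = 1) :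
    |mutInf (fun p : U × (Fin n → Z) =>
        ∑ xn : Fin n → X, (∏ m : Fin n, V m (xn m) (p.2 m)) * E p.1 xn *
          ((Fintype.card U : ℝ))⁻¹) -
      mutInf (fun p : U × (Fin n → Z) =>
        ∑ xn : Fin n → X, (∏ m : Fin n, V' m (xn m) (p.2 m)) * E p.1 xn *
          ((Fintype.card U : ℝ))⁻¹)| ≤
      (n : ℝ) * (4 * ε * Real.logb 2 (Fintype.card Z) + 4 * H2 ε) := by
  have hrow : ∀ m x, ∑ z, |V m x z - V' m x z| ≤ ε := fun m x =>
    (le_ciSup (Set.finite_range _).bddAbove x).trans (hd m)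
  have hjoint : ∀ W : Fin n → X → Z → ℝ,
      (fun p : U × (Fin n → Z) => ∑ xn, (∏ m, W m (xn m) (p.2 m)) * E p.1 xn *
        ((Fintype.card U : ℝ))⁻¹) =
      fun p => ((Fintype.card U : ℝ))⁻¹ * productOutput W (E p.1) p.2 := fun W => by
    ext p
    simp only [productOutput, mul_sum]
    exact sum_congr rfl fun xn _ => by ring
  rw [hjoint, hjoint]
  have hbound := abs_mutInf_productOutput_sub_le (ρ := fun _ => ((Fintype.card U : ℝ))⁻¹)
    (fun _ => by positivity) (by simp) (fun u => (hE u).1) (fun u => (hE u).2) hV hV'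
    hε.1.le hε.2.le hrow
  refine hbound.trans_eq ?_
  rw [H2_eq_binEntropy_div_log_two, logb, Fintype.card_fin]
  field_simp
  ring
end

section
/- Let W* = {W₁*, W₂*} be the AVC with input alphabet X = {1,2}, output alphabet Y = {1,2,3} and state set {1,2}, where W₁*(·|1)=(1/2,1/2,0), W₁*(·|2)=(1/4,0,3/4), W₂*(·|1)=(0,0,1), W₂*(·|2)=(0,1,0). Then there exists ε₁ > 0 such that every AVC W = {W(·|·,s)}_{s∈S} with input alphabet X, output alphabet Y, finite state set S, and D(W*,W) < ε₁ is symmetrizable. -/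
open Real Finset

/-- An AVC `W = {W(·|·,s)}_{s∈S}` is symmetrizable: there is a stochastic matrix
`σ : X → P(S)` with `∑_s W(y|x₁,s)σ(s|x₂) = ∑_s W(y|x₂,s)σ(s|x₁)` for all `x₁,x₂,y`. -/
def Symmetrizable {X Y S : Type*} [Fintype Y] [Fintype S] (W : S → X → Y → ℝ) : Prop :=
  ∃ σ : X → S → ℝ, IsChannel σ ∧
    ∀ x₁ x₂ y, (∑ s : S, W s x₁ y * σ x₂ s) = ∑ s : S, W s x₂ y * σ x₁ s

/-- Distance `D(W₁,W₂)` between two AVCs (families of channels). -/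
noncomputable def Davc {X Y : Type*} [Fintype Y] {S₁ S₂ : Type*}
    (W₁ : S₁ → X → Y → ℝ) (W₂ : S₂ → X → Y → ℝ) : ℝ :=
  max (⨆ s₂ : S₂, ⨅ s₁ : S₁, dChan (W₁ s₁) (W₂ s₂))
      (⨆ s₁ : S₁, ⨅ s₂ : S₂, dChan (W₁ s₁) (W₂ s₂))

/-- The symmetrizability gap function
`F(σ,σ',W) = ∑_{x₁,x₂,y} |∑_s W(y|x₁,s)σ(s|x₂) − ∑_s W(y|x₂,s)σ'(s|x₁)|`. -/
noncomputable def Fsym {X Y S : Type*} [Fintype X] [Fintype Y] [Fintype S]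
    (σ σ' : X → S → ℝ) (W : S → X → Y → ℝ) : ℝ :=
  ∑ x₁ : X, ∑ x₂ : X, ∑ y : Y,
    |(∑ s : S, W s x₁ y * σ x₂ s) - ∑ s : S, W s x₂ y * σ' x₁ s|

/-- The AVC `W* = {W₁*, W₂*}`: state `s` (first index), input `x`, output `y`. -/
noncomputable def Wstar : Fin 2 → Fin 2 → Fin 3 → ℝ :=
  ![![![1 / 2, 1 / 2, 0], ![1 / 4, 0, 3 / 4]], ![![0, 0, 1], ![0, 1, 0]]]

/-!
For a binary input alphabet, an AVC is symmetrizable as soon as some mixture of the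
channels `W(·|1,s)` equals some mixture of the channels `W(·|2,s)`. For `W*` the two
segments `[W₁*(·|1), W₂*(·|1)]` and `[W₁*(·|2), W₂*(·|2)]` cross transversally at interior
points (with weights `2/5` and `4/5`), and transversal crossing of two segments is stable
under small perturbations of their endpoints. An AVC `D`-close to `W*` has two states whose
channels are close to `W₁*` and `W₂*`, so its corresponding segments still meet.
-/

open Filter Topology

section Symmetrizable

variable {X Y S : Type*} [Fintype Y] [Fintype S]

lemma sum_mul_sum_ite_eq {S' : Type*} [Fintype S'] [DecidableEq S] (t : S' → S)
    (f : S → ℝ) (g : S' → ℝ) :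
    ∑ s, f s * ∑ s', (if t s' = s then g s' else 0) = ∑ s', f (t s') * g s' := by
  simp only [Finset.mul_sum, mul_ite, mul_zero]
  rw [Finset.sum_comm]
  simp only [Finset.sum_ite_eq, Finset.mem_univ, if_true]

lemma Symmetrizable.of_comp {S' : Type*} [Fintype S'] {W : S → X → Y → ℝ} (t : S' → S)
    (h : Symmetrizable (fun s' => W (t s'))) : Symmetrizable W := by
  classical
  obtain ⟨σ, hσ, hsym⟩ := h
  refine ⟨fun x s => ∑ s', if t s' = s then σ x s' else 0, fun x => ⟨fun s => ?_, ?_⟩, ?_⟩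
  · exact Finset.sum_nonneg fun s' _ => by split_ifs <;> simp [(hσ x).1 s']
  · have h := sum_mul_sum_ite_eq t (fun _ => (1 : ℝ)) (σ x)
    simp only [one_mul] at h
    exact h.trans (hσ x).2
  · intro x₁ x₂ y
    simpa only [sum_mul_sum_ite_eq] using hsym x₁ x₂ y

lemma symmetrizable_of_mixtures_eq {W : S → Fin 2 → Y → ℝ} {p q : S → ℝ}
    (hp : IsProb p) (hq : IsProb q)
    (h : ∀ y, ∑ s, W s 0 y * q s = ∑ s, W s 1 y * p s) : Symmetrizable W := by
  refine ⟨![p, q], fun x => ?_, fun x₁ x₂ y => ?_⟩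
  · fin_cases x
    exacts [hp, hq]
  · fin_cases x₁ <;> fin_cases x₂
    exacts [rfl, h y, (h y).symm, rfl]

lemma abs_sub_le_dChan [Finite X] (W W' : X → Y → ℝ) (x : X) (y : Y) :
    |W x y - W' x y| ≤ dChan W W' :=
  calc |W x y - W' x y| ≤ ∑ y', |W x y' - W' x y'| :=
        Finset.single_le_sum (f := fun y' => |W x y' - W' x y'|)
          (fun _ _ => abs_nonneg _) (Finset.mem_univ y)
    _ ≤ dChan W W' := le_ciSup (f := fun x => ∑ y', |W x y' - W' x y'|)
        (Set.finite_range _).bddAbove x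

lemma exists_dChan_lt_of_Davc_lt {S₁ S₂ : Type*} [Finite S₁] [Nonempty S₂]
    {W₁ : S₁ → X → Y → ℝ} {W₂ : S₂ → X → Y → ℝ} {ε : ℝ} (h : Davc W₁ W₂ < ε) (s₁ : S₁) :
    ∃ s₂, dChan (W₁ s₁) (W₂ s₂) < ε :=
  exists_lt_of_ciInf_lt <|
    (le_ciSup (Set.finite_range _).bddAbove s₁).trans_lt ((le_max_right _ _).trans_lt h)

lemma symmetrizable_of_segments_meet {V : Fin 2 → Fin 2 → Y → ℝ} {a b : ℝ}
    (ha : a ∈ Set.Icc (0 : ℝ) 1) (hb : b ∈ Set.Icc (0 : ℝ) 1)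
    (h : b • (V 0 0 - V 1 0) - a • (V 0 1 - V 1 1) = V 1 1 - V 1 0) : Symmetrizable V := by
  have isProb_pair : ∀ c ∈ Set.Icc (0 : ℝ) 1, IsProb ![c, 1 - c] := fun c hc =>
    ⟨fun i => by fin_cases i <;> simp [hc.1, hc.2], by simp⟩
  refine symmetrizable_of_mixtures_eq (isProb_pair a ha) (isProb_pair b hb) fun y => ?_
  have hy := congrFun h y
  simp only [Pi.sub_apply, Pi.smul_apply, smul_eq_mul] at hy
  simp only [Fin.sum_univ_two, Matrix.cons_val_zero, Matrix.cons_val_one]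
  linarith

end Symmetrizable

def det₂ (u w : Fin 3 → ℝ) : ℝ := u 0 * w 1 - u 1 * w 0

/-- Cramer's rule in the plane `{v | ∑ i, v i = 0}`. -/
lemma det₂_smul_sub_det₂_smul {u w r : Fin 3 → ℝ}
    (hu : ∑ i, u i = 0) (hw : ∑ i, w i = 0) (hr : ∑ i, r i = 0) :
    det₂ w r • u - det₂ u r • w = det₂ w u • r := by
  simp only [Fin.sum_univ_three] at hu hw hr
  funext i
  fin_cases i <;> simp only [det₂, Fin.zero_eta, Fin.mk_one, Fin.reduceFinMk, Fin.isValue,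
    Pi.sub_apply, Pi.smul_apply, smul_eq_mul]
  · ring
  · ring
  · linear_combination (w 0 * r 1 - w 1 * r 0) * hu - (u 0 * r 1 - u 1 * r 0) * hw
      - (w 0 * u 1 - w 1 * u 0) * hr

lemma eventually_symmetrizable_nhds_Wstar :
    ∀ᶠ V in 𝓝 Wstar, (∀ s, IsChannel (V s)) → Symmetrizable V := by
  set u : (Fin 2 → Fin 2 → Fin 3 → ℝ) → Fin 3 → ℝ := fun V => V 0 0 - V 1 0
  set w : (Fin 2 → Fin 2 → Fin 3 → ℝ) → Fin 3 → ℝ := fun V => V 0 1 - V 1 1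
  set r : (Fin 2 → Fin 2 → Fin 3 → ℝ) → Fin 3 → ℝ := fun V => V 1 1 - V 1 0
  set crossing := {V | 0 < det₂ (w V) (r V) ∧ det₂ (w V) (r V) < det₂ (w V) (u V) ∧
    0 < det₂ (u V) (r V) ∧ det₂ (u V) (r V) < det₂ (w V) (u V)}
  have hopen : IsOpen crossing := by
    simp only [crossing, Set.ofPred_and, u, w, r, det₂, Pi.sub_apply]
    refine .inter (isOpen_lt ?_ ?_) (.inter (isOpen_lt ?_ ?_) (.inter (isOpen_lt ?_ ?_)
      (isOpen_lt ?_ ?_))) <;> fun_prop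
  -- at `W*`: `det₂ (w V) (r V) = 1/4`, `det₂ (u V) (r V) = 1/2`, `det₂ (w V) (u V) = 5/8`
  have hWstar : Wstar ∈ crossing := by
    norm_num [crossing, u, w, r, det₂, Wstar]
  filter_upwards [hopen.mem_nhds hWstar] with V ⟨hb₀, hb₁, ha₀, ha₁⟩ hV
  have hd : 0 < det₂ (w V) (u V) := hb₀.trans hb₁
  have sum_sub : ∀ s x s' x', ∑ i, (V s x - V s' x') i = 0 := fun s x s' x' => by
    simp [Finset.sum_sub_distrib, (hV s x).2, (hV s' x').2]
  have hcramer := det₂_smul_sub_det₂_smul (sum_sub 0 0 1 0) (sum_sub 0 1 1 1) (sum_sub 1 1 1 0)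
  refine symmetrizable_of_segments_meet
    ⟨(div_pos ha₀ hd).le, (div_lt_one hd).2 ha₁ |>.le⟩
    ⟨(div_pos hb₀ hd).le, (div_lt_one hd).2 hb₁ |>.le⟩ ?_
  rw [div_eq_inv_mul, div_eq_inv_mul, mul_smul, mul_smul, ← smul_sub, hcramer,
    inv_smul_smul₀ hd.ne']

/-- every AVC in a sufficiently small `D`-neighborhood of `W*` (with an
arbitrary finite state set) is symmetrizable. -/
theorem Wstar_neighborhood_symmetrizable :
    ∃ ε₁ > (0 : ℝ), ∀ (S : Type*) [Fintype S] [Nonempty S]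
      (W : S → Fin 2 → Fin 3 → ℝ),
      (∀ s, IsChannel (W s)) → Davc Wstar W < ε₁ → Symmetrizable W := by
  obtain ⟨ε, hε, hnear⟩ := Metric.eventually_nhds_iff.mp eventually_symmetrizable_nhds_Wstar
  refine ⟨ε, hε, fun S _ _ W hW hD => ?_⟩
  choose t ht using exists_dChan_lt_of_Davc_lt hD
  refine Symmetrizable.of_comp t (hnear ?_ fun i => hW (t i))
  simp only [dist_pi_lt_iff hε, Real.dist_eq]
  intro i x y
  rw [abs_sub_comm]
  exact (abs_sub_le_dChan _ _ x y).trans_lt (ht i)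
end

section
/- Let W = {W(·|·,s)}_{s∈S} be a non-symmetrizable AVC with finite alphabets X, Y and finite state set S. Then there exists ε > 0 such that every AVC W' = {W'(·|·,s')}_{s'∈S'} over the same alphabets with finite state set S' and D(W,W') < ε is also non-symmetrizable. -/
open Real Finset

/-!
The gap `σ ↦ Fsym σ σ W` is continuous on the compact set of channels `X → P(S)` and vanishes
exactly at the symmetrizing channels, so for non-symmetrizable `W` it has a positive minimum `m`.
If `W'` is symmetrized by `σ'` and every state `s'` of `W'` is `δ`-close to a state `φ s'` of `W`,
then the push-forward of `σ'` along `φ` is a channel whose gap for `W` is at most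
`Fsym σ' σ' W' + 2|X|²δ = 2|X|²δ`; hence `δ < m / (2|X|²)` is impossible.
-/

lemma isCompact_setOf_isChannel (X S : Type*) [Fintype S] :
    IsCompact {σ : X → S → ℝ | IsChannel σ} := by
  convert isCompact_univ_pi fun _ : X => isCompact_stdSimplex ℝ S
  simp [Set.ext_iff, IsChannel, stdSimplex]

lemma nonempty_setOf_isChannel (X S : Type*) [Fintype S] [Nonempty S] :
    {σ : X → S → ℝ | IsChannel σ}.Nonempty := by
  classical
  exact ⟨fun _ => Pi.single (Classical.arbitrary S) 1, fun _ => single_mem_stdSimplex ℝ _⟩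

lemma sum_abs_sub_le_dChan {X Y : Type*} [Finite X] [Fintype Y] (W W' : X → Y → ℝ) (x : X) :
    ∑ y, |W x y - W' x y| ≤ dChan W W' :=
  le_ciSup (f := fun x => ∑ y, |W x y - W' x y|) (Set.finite_range _).bddAbove x

lemma exists_dChan_lt_of_Davc_lt_s19 {X Y S S' : Type*} [Fintype Y] [Finite S] [Nonempty S]
    [Finite S'] {W : S → X → Y → ℝ} {W' : S' → X → Y → ℝ} {ε : ℝ} (h : Davc W W' < ε)
    (s' : S') : ∃ s, dChan (W s) (W' s') < ε := by
  obtain ⟨s, hs⟩ := exists_eq_ciInf_of_finite (f := fun s => dChan (W s) (W' s'))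
  refine ⟨s, ?_⟩
  calc dChan (W s) (W' s') = ⨅ s, dChan (W s) (W' s') := hs
    _ ≤ ⨆ s', ⨅ s, dChan (W s) (W' s') :=
      le_ciSup (f := fun s' => ⨅ s, dChan (W s) (W' s')) (Set.finite_range _).bddAbove s'
    _ ≤ Davc W W' := le_max_left _ _
    _ < ε := h

lemma sum_abs_mix_sub_mix_le {S Y : Type*} [Fintype S] [Fintype Y] {p : S → ℝ} (hp : IsProb p)
    {A B : S → Y → ℝ} {δ : ℝ} (hAB : ∀ s, ∑ y, |A s y - B s y| ≤ δ) :
    ∑ y, |∑ s, A s y * p s - ∑ s, B s y * p s| ≤ δ :=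
  calc ∑ y, |∑ s, A s y * p s - ∑ s, B s y * p s|
      ≤ ∑ y, ∑ s, |A s y - B s y| * p s := by
        gcongr with y
        rw [← Finset.sum_sub_distrib]
        refine (Finset.abs_sum_le_sum_abs _ _).trans_eq (Finset.sum_congr rfl fun s _ => ?_)
        rw [← sub_mul, abs_mul, abs_of_nonneg (hp.1 s)]
    _ = ∑ s, (∑ y, |A s y - B s y|) * p s := by
        rw [Finset.sum_comm]
        simp only [Finset.sum_mul]
    _ ≤ ∑ s, δ * p s := by
        gcongr with s
        · exact hp.1 s
        · exact hAB s
    _ = δ := by rw [← Finset.mul_sum, hp.2, mul_one]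

section Fsym

variable {X Y S : Type*} [Fintype X] [Fintype Y] [Fintype S]

lemma Fsym_nonneg (σ τ : X → S → ℝ) (W : S → X → Y → ℝ) : 0 ≤ Fsym σ τ W := by
  unfold Fsym
  positivity

lemma continuous_Fsym_diag (W : S → X → Y → ℝ) : Continuous fun σ : X → S → ℝ => Fsym σ σ W := by
  unfold Fsym
  fun_prop

lemma Fsym_eq_zero_iff {σ τ : X → S → ℝ} {W : S → X → Y → ℝ} :
    Fsym σ τ W = 0 ↔ ∀ x₁ x₂ y, ∑ s, W s x₁ y * σ x₂ s = ∑ s, W s x₂ y * τ x₁ s := by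
  simp (disch := intros; positivity) only [Fsym, Finset.sum_eq_zero_iff_of_nonneg,
    Finset.mem_univ, forall_const, abs_eq_zero, sub_eq_zero]

lemma symmetrizable_iff_exists_Fsym_eq_zero {W : S → X → Y → ℝ} :
    Symmetrizable W ↔ ∃ σ, IsChannel σ ∧ Fsym σ σ W = 0 := by
  simp only [Symmetrizable, Fsym_eq_zero_iff]

lemma exists_pos_le_Fsym_of_not_symmetrizable [Nonempty S] {W : S → X → Y → ℝ}
    (h : ¬ Symmetrizable W) : ∃ m > 0, ∀ σ, IsChannel σ → m ≤ Fsym σ σ W := by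
  obtain ⟨σ₀, hσ₀, hmin⟩ := (isCompact_setOf_isChannel X S).exists_isMinOn
    (nonempty_setOf_isChannel X S) (continuous_Fsym_diag W).continuousOn
  refine ⟨Fsym σ₀ σ₀ W, (Fsym_nonneg _ _ _).lt_of_ne fun h0 => ?_, fun σ hσ => hmin hσ⟩
  exact h (symmetrizable_iff_exists_Fsym_eq_zero.2 ⟨σ₀, hσ₀, h0.symm⟩)

lemma Fsym_le_Fsym_add {σ τ : X → S → ℝ} (hσ : IsChannel σ) (hτ : IsChannel τ)
    {V V' : S → X → Y → ℝ} {δ : ℝ} (hVV' : ∀ s, dChan (V s) (V' s) ≤ δ) :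
    Fsym σ τ V ≤ Fsym σ τ V' + 2 * Fintype.card X ^ 2 * δ := by
  have hmix : ∀ {ρ : X → S → ℝ}, IsChannel ρ → ∀ x x', ∑ y,
      |∑ s, V s x y * ρ x' s - ∑ s, V' s x y * ρ x' s| ≤ δ := fun hρ x x' =>
    sum_abs_mix_sub_mix_le (hρ x') fun s => (sum_abs_sub_le_dChan _ _ x).trans (hVV' s)
  calc Fsym σ τ V
      ≤ ∑ x₁, ∑ x₂, ∑ y,
          (|∑ s, V' s x₁ y * σ x₂ s - ∑ s, V' s x₂ y * τ x₁ s|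
            + |∑ s, V s x₁ y * σ x₂ s - ∑ s, V' s x₁ y * σ x₂ s|
            + |∑ s, V s x₂ y * τ x₁ s - ∑ s, V' s x₂ y * τ x₁ s|) := by
        refine Finset.sum_le_sum fun x₁ _ => Finset.sum_le_sum fun x₂ _ =>
          Finset.sum_le_sum fun y _ => ?_
        rw [abs_sub_comm (∑ s, V s x₂ y * τ x₁ s)]
        exact (abs_add_three _ _ _).trans_eq' (by ring_nf)
    _ ≤ ∑ x₁ : X, ∑ x₂ : X, ((∑ y, |∑ s, V' s x₁ y * σ x₂ s - ∑ s, V' s x₂ y * τ x₁ s|)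
          + δ + δ) := by
        refine Finset.sum_le_sum fun x₁ _ => Finset.sum_le_sum fun x₂ _ => ?_
        rw [Finset.sum_add_distrib, Finset.sum_add_distrib]
        gcongr
        · exact hmix hσ x₁ x₂
        · exact hmix hτ x₂ x₁
    _ = Fsym σ τ V' + 2 * Fintype.card X ^ 2 * δ := by
        simp only [Fsym, Finset.sum_add_distrib, Finset.sum_const, Finset.card_univ, nsmul_eq_mul]
        ring

end Fsym

section pushChannel

variable {X S S' : Type*} [Fintype S'] [DecidableEq S]

def pushChannel (φ : S' → S) (σ : X → S' → ℝ) : X → S → ℝ :=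
  fun x s => ∑ s' with φ s' = s, σ x s'

lemma sum_mul_pushChannel [Fintype S] (φ : S' → S) (σ : X → S' → ℝ) (f : S → ℝ) (x : X) :
    ∑ s, f s * pushChannel φ σ x s = ∑ s', f (φ s') * σ x s' := by
  simp only [pushChannel, Finset.mul_sum]
  rw [← Finset.sum_fiberwise Finset.univ φ]
  refine Finset.sum_congr rfl fun s _ => Finset.sum_congr rfl fun s' hs' => ?_
  rw [(Finset.mem_filter.1 hs').2]

lemma IsChannel.pushChannel [Fintype S] {σ : X → S' → ℝ} (hσ : IsChannel σ) (φ : S' → S) :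
    IsChannel (pushChannel φ σ) := fun x => by
  refine ⟨fun _ => Finset.sum_nonneg fun s' _ => (hσ x).1 s', ?_⟩
  simpa only [one_mul, (hσ x).2] using sum_mul_pushChannel φ σ (fun _ => 1) x

lemma Fsym_pushChannel [Fintype X] [Fintype S] {Y : Type*} [Fintype Y] (φ : S' → S)
    (σ τ : X → S' → ℝ) (W : S → X → Y → ℝ) :
    Fsym (pushChannel φ σ) (pushChannel φ τ) W = Fsym σ τ fun s' => W (φ s') := by
  simp only [Fsym, sum_mul_pushChannel]

end pushChannel

theorem nonsymmetrizable_stability_general {X Y S : Type*}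
    [Fintype X] [Fintype Y] [Fintype S] [Nonempty S]
    (W : S → X → Y → ℝ)
    (hns : ¬ Symmetrizable W) :
    ∃ ε > (0 : ℝ), ∀ (S' : Type*) [Fintype S'] [Nonempty S']
      (W' : S' → X → Y → ℝ),
      (∀ s', IsChannel (W' s')) → Davc W W' < ε → ¬ Symmetrizable W' := by
  classical
  obtain ⟨m, hm, hmin⟩ := exists_pos_le_Fsym_of_not_symmetrizable hns
  set c : ℝ := 2 * Fintype.card X ^ 2
  refine ⟨m / (c + 1), by positivity, fun S' _ _ W' _ hD hsym => ?_⟩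
  obtain ⟨σ', hσ', hσ'0⟩ := symmetrizable_iff_exists_Fsym_eq_zero.1 hsym
  choose φ hφ using exists_dChan_lt_of_Davc_lt_s19 hD
  have hm_le : m ≤ c * (m / (c + 1)) := calc
    m ≤ Fsym (pushChannel φ σ') (pushChannel φ σ') W := hmin _ (hσ'.pushChannel φ)
    _ = Fsym σ' σ' fun s' => W (φ s') := Fsym_pushChannel φ σ' σ' W
    _ ≤ Fsym σ' σ' W' + c * (m / (c + 1)) := Fsym_le_Fsym_add hσ' hσ' fun s' => (hφ s').le
    _ = c * (m / (c + 1)) := by rw [hσ'0, zero_add]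
  have hlt : c * (m / (c + 1)) < m := by
    rw [← mul_div_assoc, div_lt_iff₀ (by positivity)]
    linarith
  exact hm_le.not_gt hlt

/-- non-symmetrizability is stable: every AVC in a sufficiently small
`D`-neighborhood of a non-symmetrizable AVC is itself non-symmetrizable. -/
theorem nonsymmetrizable_stability {X Y S : Type*}
    [Fintype X] [Fintype Y] [Fintype S] [Nonempty X] [Nonempty S]
    (W : S → X → Y → ℝ) (hW : ∀ s, IsChannel (W s))
    (hns : ¬ Symmetrizable W) :
    ∃ ε > (0 : ℝ), ∀ (S' : Type*) [Fintype S'] [Nonempty S']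
      (W' : S' → X → Y → ℝ),
      (∀ s', IsChannel (W' s')) → Davc W W' < ε → ¬ Symmetrizable W' :=
  nonsymmetrizable_stability_general W hns
end
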